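/- arXiv:1803.07494 — 6 statements merged into one kernel-verified Lean document; each statement's English description precedes it below -/
import Mathlib

section
/- Let (X, μ) be a σ-finite measure space, let q ≥ 2 be real and p = q/(q−1). Let α : X → [0,∞) be measurable with α ∈ L^∞(μ) ∩ L^p(μ), and let f : ℝ → ℝ be continuous with |f(t)| ≤ β(1 + |t|^{q−1}) for all t ∈ ℝ, where β > 0. Then for every w ∈ L^q(μ) the function α·(f∘w) belongs to L^p(μ), and the map w ↦ α·(f∘w) is continuous from L^q(μ) to L^p(μ): if w_j → w in L^q(μ) then α·f(w_j) → α·f(w) in L^p(μ). -/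
/-!
Along a subsequence with `‖w_{j_k} - w‖_q ≤ 2^{-k/q}`, the function
`G = |w| + (∑ₖ |w_{j_k} - w|^q)^{1/q}` lies in `L^q`, dominates every `w_{j_k}` and forces
`w_{j_k} → w` a.e. The growth condition then gives `|α f(w_{j_k})| ≤ β (|α| + |α| G^{q-1})`,
which lies in `L^p` because `α ∈ L^p`, `α ∈ L^∞` and `G^{q-1} ∈ L^{q/(q-1)} = L^p`, so dominated
convergence yields `α f(w_{j_k}) → α f(w)` in `L^p`. As every subsequence of `(w_j)` has such
a further subsequence, the whole sequence converges.
-/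

open MeasureTheory Filter
open scoped ENNReal Topology

namespace MeasureTheory

variable {α E : Type*} [MeasurableSpace α] {μ : Measure α} [NormedAddCommGroup E]

theorem exists_subseq_lintegral_tsum_lt_top {F : ℕ → α → ℝ≥0∞} (hF : ∀ n, AEMeasurable (F n) μ)
    (h : Tendsto (fun n => ∫⁻ x, F n x ∂μ) atTop (𝓝 0)) :
    ∃ φ : ℕ → ℕ, StrictMono φ ∧ ∫⁻ x, ∑' k, F (φ k) x ∂μ < ∞ := by
  obtain ⟨φ, hφ, hsmall⟩ := extraction_forall_of_eventually
    (P := fun k n => ∫⁻ x, F n x ∂μ ≤ 2⁻¹ ^ k) fun k =>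
      (h.eventually_lt_const (ENNReal.pow_pos (by simp) k)).mono fun n hn => hn.le
  refine ⟨φ, hφ, ?_⟩
  calc ∫⁻ x, ∑' k, F (φ k) x ∂μ = ∑' k, ∫⁻ x, F (φ k) x ∂μ := lintegral_tsum fun k => hF (φ k)
    _ ≤ ∑' k : ℕ, (2⁻¹ : ℝ≥0∞) ^ k := ENNReal.tsum_le_tsum hsmall
    _ = 2 := by rw [ENNReal.tsum_geometric, ENNReal.one_sub_inv_two, inv_inv]
    _ < ∞ := ENNReal.ofNat_lt_top

theorem tendsto_lintegral_rpow_enorm_of_tendsto_eLpNorm {p : ℝ≥0∞} (hp0 : p ≠ 0) (hp : p ≠ ∞)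
    {f : ℕ → α → E} (h : Tendsto (fun n => eLpNorm (f n) p μ) atTop (𝓝 0)) :
    Tendsto (fun n => ∫⁻ x, ‖f n x‖ₑ ^ p.toReal ∂μ) atTop (𝓝 0) := by
  have hr : 0 < p.toReal := ENNReal.toReal_pos hp0 hp
  have := (ENNReal.continuous_rpow_const (y := p.toReal)).tendsto 0 |>.comp h
  rw [ENNReal.zero_rpow_of_pos hr] at this
  refine this.congr fun n => ?_
  simp only [Function.comp_apply, eLpNorm_eq_lintegral_rpow_enorm_toReal hp0 hp, one_div]
  exact ENNReal.rpow_inv_rpow hr.ne' _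

theorem memLp_toReal_rpow_inv_of_lintegral_lt_top {p : ℝ≥0∞} (hp0 : p ≠ 0) (hp : p ≠ ∞)
    {H : α → ℝ≥0∞} (hH_meas : AEMeasurable H μ) (hH : ∫⁻ x, H x ∂μ < ∞) :
    MemLp (fun x => (H x ^ p.toReal⁻¹).toReal) p μ := by
  have hr : p.toReal ≠ 0 := (ENNReal.toReal_pos hp0 hp).ne'
  refine ⟨(hH_meas.pow_const _).ennreal_toReal.aestronglyMeasurable, ?_⟩
  rw [eLpNorm_lt_top_iff_lintegral_rpow_enorm_lt_top hp0 hp]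
  refine lt_of_le_of_lt (lintegral_mono fun x => ?_) hH
  calc ‖(H x ^ p.toReal⁻¹).toReal‖ₑ ^ p.toReal ≤ (H x ^ p.toReal⁻¹) ^ p.toReal := by
        gcongr
        rw [Real.enorm_eq_ofReal ENNReal.toReal_nonneg]
        exact ENNReal.ofReal_toReal_le
    _ = H x := ENNReal.rpow_inv_rpow hr _

theorem exists_dominated_subseq_ae_tendsto_of_tendsto_eLpNorm {p : ℝ≥0∞} (hp0 : p ≠ 0)
    (hp : p ≠ ∞) {u : ℕ → α → E} {w : α → E} (hu : ∀ n, AEStronglyMeasurable (u n) μ)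
    (hw : MemLp w p μ) (h : Tendsto (fun n => eLpNorm (u n - w) p μ) atTop (𝓝 0)) :
    ∃ φ : ℕ → ℕ, StrictMono φ ∧ ∃ G : α → ℝ, MemLp G p μ ∧
      (∀ᵐ x ∂μ, ∀ k, ‖u (φ k) x‖ ≤ G x) ∧
      ∀ᵐ x ∂μ, Tendsto (fun k => u (φ k) x) atTop (𝓝 (w x)) := by
  set r := p.toReal
  have hr : r ≠ 0 := (ENNReal.toReal_pos hp0 hp).ne'
  have hmeas : ∀ n, AEMeasurable (fun x => ‖u n x - w x‖ₑ ^ r) μ := fun n =>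
    ((hu n).sub hw.1).enorm.pow_const r
  obtain ⟨φ, hφ, hH⟩ := exists_subseq_lintegral_tsum_lt_top hmeas
    (tendsto_lintegral_rpow_enorm_of_tendsto_eLpNorm hp0 hp h)
  set H : α → ℝ≥0∞ := fun x => ∑' k, ‖u (φ k) x - w x‖ₑ ^ r
  have hH_meas : AEMeasurable H μ := AEMeasurable.tsum fun k => hmeas (φ k)
  have hH_fin : ∀ᵐ x ∂μ, H x < ∞ := ae_lt_top' hH_meas hH.ne
  have hle (x : α) (k : ℕ) : ‖u (φ k) x - w x‖ₑ ≤ H x ^ r⁻¹ := by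
    rw [← ENNReal.rpow_rpow_inv hr ‖u (φ k) x - w x‖ₑ]
    gcongr
    exact ENNReal.le_tsum (f := fun k => ‖u (φ k) x - w x‖ₑ ^ r) k
  refine ⟨φ, hφ, fun x => ‖w x‖ + (H x ^ r⁻¹).toReal,
    hw.norm.add (memLp_toReal_rpow_inv_of_lintegral_lt_top hp0 hp hH_meas hH), ?_, ?_⟩
  · filter_upwards [hH_fin] with x hx k
    have hdiff : ‖u (φ k) x - w x‖ ≤ (H x ^ r⁻¹).toReal := by
      rw [← toReal_enorm]
      exact ENNReal.toReal_mono (ENNReal.rpow_lt_top_of_nonneg (by positivity) hx.ne).ne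
        (hle x k)
    calc ‖u (φ k) x‖ ≤ ‖w x‖ + ‖u (φ k) x - w x‖ := norm_le_insert' _ _
      _ ≤ _ := by gcongr
  · filter_upwards [hH_fin] with x hx
    have hterm := ENNReal.tendsto_atTop_zero_of_tsum_ne_top hx.ne
    have h_enorm : Tendsto (fun k => ‖u (φ k) x - w x‖ₑ) atTop (𝓝 0) := by
      have := (ENNReal.continuous_rpow_const (y := r⁻¹)).tendsto 0 |>.comp hterm
      rw [ENNReal.zero_rpow_of_pos (by positivity)] at this
      exact this.congr fun k => ENNReal.rpow_rpow_inv hr _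
    have h_norm := (ENNReal.tendsto_toReal ENNReal.zero_ne_top).comp h_enorm
    simp only [Function.comp_def, toReal_enorm, ENNReal.toReal_zero] at h_norm
    exact tendsto_iff_norm_sub_tendsto_zero.2 h_norm

theorem tendsto_eLpNorm_sub_of_dominated {p : ℝ≥0∞} (hp : p ≠ ∞) {F : ℕ → α → E}
    {f : α → E} {g : α → ℝ} (hF : ∀ n, AEStronglyMeasurable (F n) μ) (hg : MemLp g p μ)
    (h_bound : ∀ n, ∀ᵐ x ∂μ, ‖F n x‖ ≤ g x)
    (h_lim : ∀ᵐ x ∂μ, Tendsto (fun n => F n x) atTop (𝓝 (f x))) :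
    Tendsto (fun n => eLpNorm (F n - f) p μ) atTop (𝓝 0) := by
  rcases eq_or_ne p 0 with rfl | hp0
  · simp
  set r := p.toReal
  have hr : 0 < r := ENNReal.toReal_pos hp0 hp
  have hf : AEStronglyMeasurable f μ := aestronglyMeasurable_of_tendsto_ae atTop hF h_lim
  have hf_bound : ∀ᵐ x ∂μ, ‖f x‖ ≤ g x := by
    filter_upwards [ae_all_iff.2 h_bound, h_lim] with x hx hlim
    exact le_of_tendsto' (continuous_norm.tendsto _ |>.comp hlim) hx
  have h_int : Tendsto (fun n => ∫⁻ x, ‖F n x - f x‖ₑ ^ r ∂μ) atTop (𝓝 0) := by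
    have hfin : ∫⁻ x, ‖2 * g x‖ₑ ^ r ∂μ ≠ ∞ :=
      (lintegral_rpow_enorm_lt_top_of_eLpNorm_lt_top hp0 hp (hg.const_mul 2).eLpNorm_lt_top).ne
    have := tendsto_lintegral_of_dominated_convergence' (f := fun _ => 0) _
      (fun n => ((hF n).sub hf).enorm.pow_const r) (fun n => ?_) hfin ?_
    · simpa using this
    · filter_upwards [h_bound n, hf_bound] with x hFx hfx
      have hle : ‖F n x - f x‖ ≤ ‖2 * g x‖ := by
        rw [Real.norm_eq_abs, abs_of_nonneg (by linarith [norm_nonneg (f x)])]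
        linarith [norm_sub_le (F n x) (f x)]
      exact ENNReal.rpow_le_rpow (enorm_le_iff_norm_le.2 hle) hr.le
    · filter_upwards [h_lim] with x hx
      have h1 := ((continuous_enorm.comp (continuous_sub_right (f x))).tendsto _).comp hx
      have h2 := (ENNReal.continuous_rpow_const (y := r)).tendsto _ |>.comp h1
      simpa [Function.comp_def, ENNReal.zero_rpow_of_pos hr] using h2
  have := (ENNReal.continuous_rpow_const (y := r⁻¹)).tendsto 0 |>.comp h_int
  rw [ENNReal.zero_rpow_of_pos (inv_pos.2 hr)] at this
  refine this.congr fun n => ?_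
  simp only [Function.comp_apply, eLpNorm_eq_lintegral_rpow_enorm_toReal hp0 hp, one_div]
  rfl

end MeasureTheory

section GrowthBound

variable {X : Type*} [MeasurableSpace X] {μ : Measure X}

theorem memLp_mul_abs_rpow_sub_one {q : ℝ} (hq : 1 < q) {a G : X → ℝ} (ha : MemLp a ⊤ μ)
    (hG : MemLp G (ENNReal.ofReal q) μ) :
    MemLp (fun x => a x * |G x| ^ (q - 1)) (ENNReal.ofReal (q / (q - 1))) μ := by
  have hpow : MemLp (fun x => |G x| ^ (q - 1)) (ENNReal.ofReal (q / (q - 1))) μ := by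
    have h := hG.norm_rpow_div (ENNReal.ofReal (q - 1))
    rwa [ENNReal.toReal_ofReal (by linarith), ← ENNReal.ofReal_div_of_pos (by linarith)] at h
  exact hpow.smul ha

theorem norm_mul_le_of_growth {q β : ℝ} (hq : 1 ≤ q) (hβ : 0 ≤ β) {f : ℝ → ℝ}
    (hf : ∀ t, |f t| ≤ β * (1 + |t| ^ (q - 1))) (a : ℝ) {t s : ℝ} (hts : |t| ≤ |s|) :
    ‖a * f t‖ ≤ β * (‖a‖ + ‖a‖ * |s| ^ (q - 1)) := by
  have hpow : |t| ^ (q - 1) ≤ |s| ^ (q - 1) :=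
    Real.rpow_le_rpow (abs_nonneg t) hts (by linarith)
  calc ‖a * f t‖ = ‖a‖ * |f t| := norm_mul _ _
    _ ≤ ‖a‖ * (β * (1 + |s| ^ (q - 1))) := by
        gcongr
        exact (hf t).trans (by gcongr)
    _ = β * (‖a‖ + ‖a‖ * |s| ^ (q - 1)) := by ring

theorem memLp_growth_bound {q : ℝ} (hq : 1 < q) {a G : X → ℝ} (ha_top : MemLp a ⊤ μ)
    (ha_p : MemLp a (ENNReal.ofReal (q / (q - 1))) μ) (β : ℝ)
    (hG : MemLp G (ENNReal.ofReal q) μ) :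
    MemLp (fun x => β * (‖a x‖ + ‖a x‖ * |G x| ^ (q - 1))) (ENNReal.ofReal (q / (q - 1))) μ :=
  (ha_p.norm.add (memLp_mul_abs_rpow_sub_one hq ha_top.norm hG)).const_mul β

end GrowthBound

theorem stmt_8_general {X : Type*} [MeasurableSpace X] (μ : Measure X)
    (q : ℝ) (hq : 2 ≤ q)
    (α : X → ℝ)
    (hα_top : MemLp α ⊤ μ) (hα_p : MemLp α (ENNReal.ofReal (q / (q - 1))) μ)
    (f : ℝ → ℝ) (hf_cont : Continuous f)
    (β : ℝ) (hβ_pos : 0 < β) (hβ : ∀ t : ℝ, |f t| ≤ β * (1 + |t| ^ (q - 1))) :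
    (∀ w : X → ℝ, MemLp w (ENNReal.ofReal q) μ →
        MemLp (fun σ => α σ * f (w σ)) (ENNReal.ofReal (q / (q - 1))) μ) ∧
    (∀ (w : X → ℝ) (wj : ℕ → X → ℝ), MemLp w (ENNReal.ofReal q) μ →
        (∀ j, MemLp (wj j) (ENNReal.ofReal q) μ) →
        Tendsto (fun j => eLpNorm (fun σ => wj j σ - w σ) (ENNReal.ofReal q) μ)
          atTop (nhds 0) →
        Tendsto (fun j => eLpNorm (fun σ => α σ * f (wj j σ) - α σ * f (w σ))
            (ENNReal.ofReal (q / (q - 1))) μ) atTop (nhds 0)) := by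
  have hq1 : 1 < q := by linarith
  have hq0 : ENNReal.ofReal q ≠ 0 := by simp only [ne_eq, ENNReal.ofReal_eq_zero]; linarith
  have hmeas {u : X → ℝ} (hu : AEStronglyMeasurable u μ) :
      AEStronglyMeasurable (fun x => α x * f (u x)) μ :=
    hα_top.1.mul (hf_cont.comp_aestronglyMeasurable hu)
  have hbound (a : ℝ) {t s : ℝ} (hts : |t| ≤ |s|) := norm_mul_le_of_growth hq1.le hβ_pos.le hβ a hts
  refine ⟨fun w hw => ?_, fun w wj hw hwj h => ?_⟩
  · refine (memLp_growth_bound hq1 hα_top hα_p β hw).of_le (hmeas hw.1) (.of_forall fun x => ?_)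
    exact (hbound (α x) le_rfl).trans (le_abs_self _)
  refine tendsto_of_subseq_tendsto fun ns hns => ?_
  obtain ⟨φ, -, G, hG, hdom, hlim⟩ := exists_dominated_subseq_ae_tendsto_of_tendsto_eLpNorm hq0
    ENNReal.ofReal_ne_top (fun n => (hwj (ns n)).1) hw (h.comp hns)
  exact ⟨φ, tendsto_eLpNorm_sub_of_dominated ENNReal.ofReal_ne_top (fun k => hmeas (hwj _).1)
    (memLp_growth_bound hq1 hα_top hα_p β hG)
    (fun k => hdom.mono fun x hx => hbound (α x) ((hx k).trans (le_abs_self _)))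
    (hlim.mono fun x hx => ((hf_cont.tendsto _).comp hx).const_mul (α x))⟩

/-- On a σ-finite measure space `(X, μ)`, with `q ≥ 2`, `p = q/(q-1)`,
`α ≥ 0` in `L^∞ ∩ L^p`, and `f` continuous with `|f(t)| ≤ β (1 + |t|^(q-1))`:
for every `w ∈ L^q(μ)` the function `α · (f ∘ w)` lies in `L^p(μ)`, and the Nemytskii
map `w ↦ α · (f ∘ w)` is (sequentially) continuous from `L^q(μ)` to `L^p(μ)`. -/
theorem stmt_8 {X : Type*} [MeasurableSpace X] (μ : Measure X) [SigmaFinite μ]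
    (q : ℝ) (hq : 2 ≤ q)
    (α : X → ℝ) (hα_meas : Measurable α) (hα_nonneg : ∀ σ, 0 ≤ α σ)
    (hα_top : MemLp α ⊤ μ) (hα_p : MemLp α (ENNReal.ofReal (q / (q - 1))) μ)
    (f : ℝ → ℝ) (hf_cont : Continuous f)
    (β : ℝ) (hβ_pos : 0 < β) (hβ : ∀ t : ℝ, |f t| ≤ β * (1 + |t| ^ (q - 1))) :
    (∀ w : X → ℝ, MemLp w (ENNReal.ofReal q) μ →
        MemLp (fun σ => α σ * f (w σ)) (ENNReal.ofReal (q / (q - 1))) μ) ∧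
    (∀ (w : X → ℝ) (wj : ℕ → X → ℝ), MemLp w (ENNReal.ofReal q) μ →
        (∀ j, MemLp (wj j) (ENNReal.ofReal q) μ) →
        Tendsto (fun j => eLpNorm (fun σ => wj j σ - w σ) (ENNReal.ofReal q) μ)
          atTop (nhds 0) →
        Tendsto (fun j => eLpNorm (fun σ => α σ * f (wj j σ) - α σ * f (w σ))
            (ENNReal.ofReal (q / (q - 1))) μ) atTop (nhds 0)) :=
  stmt_8_general μ q hq α hα_top hα_p f hf_cont β hβ_pos hβ
end

section
/- Let σ₀ ∈ ℝ^d (d ≥ 1), 0 < r < ρ and ε ∈ [1/2, 1), and let w : ℝ^d → ℝ be defined by w(x) = min{1, max{0, (r − | ‖x − σ₀‖ − ρ |)/((1−ε)r)}}. Then w is Lipschitz, hence differentiable almost everywhere; its gradient satisfies ‖∇w(x)‖ ≤ 1/((1−ε)r) for almost every x and ∇w(x) = 0 for almost every x outside A_r^ρ(σ₀) ∖ A_{εr}^ρ(σ₀); and ∫_{ℝ^d} ( ‖∇w(x)‖² + w(x)² ) dx ≤ ( 1 + 1/((1−ε)²r²) ) · vol(A_r^ρ(σ₀)), where vol denotes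 Lebesgue measure. -/
open MeasureTheory Filter Metric Set Topology

/-!
The cutoff is the clamp `s ↦ min 1 (max 0 s)` applied to a `1/((1-ε)r)`-Lipschitz function of the
distance to `σ₀`, so it is Lipschitz with that constant, which also bounds its gradient. Off the
two spheres `‖x - σ₀‖ = ρ ± r`, which are Lebesgue-null, a point outside `A_r^ρ \ A_{εr}^ρ` has a
neighbourhood on which the cutoff is constantly `0` (outside `A_r^ρ`) or `1` (inside `A_{εr}^ρ`),
so its gradient vanishes there. Hence `‖∇w‖² + w²` is a.e. bounded by `1 + 1/((1-ε)r)²` times the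
indicator of `A_r^ρ`.
-/

/-- The function `w_{ρ,r}^ε` of the paper, as a function of `t = ‖x - σ₀‖`. -/
noncomputable def annulusCutoff (r ρ ε t : ℝ) : ℝ :=
  min 1 (max 0 ((r - |t - ρ|) / ((1 - ε) * r)))

def annulus {E : Type*} [SeminormedAddCommGroup E] (σ₀ : E) (a b : ℝ) : Set E :=
  {x | b - a < ‖x - σ₀‖ ∧ ‖x - σ₀‖ < a + b}

section Annulus

variable {E : Type*} [SeminormedAddCommGroup E] {σ₀ x : E} {a b : ℝ}

theorem mem_annulus_iff : x ∈ annulus σ₀ a b ↔ |‖x - σ₀‖ - b| < a := by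
  rw [abs_sub_lt_iff]
  change _ ∧ _ ↔ _
  constructor <;> rintro ⟨h₁, h₂⟩ <;> constructor <;> linarith

theorem isOpen_annulus : IsOpen (annulus σ₀ a b) := by
  simp_rw [annulus]
  have hT : Continuous fun y : E => ‖y - σ₀‖ := (continuous_id.sub continuous_const).norm
  exact (isOpen_lt continuous_const hT).inter (isOpen_lt hT continuous_const)

theorem annulus_subset_ball : annulus σ₀ a b ⊆ ball σ₀ (a + b) :=
  fun _ hx => mem_ball_iff_norm.2 hx.2

end Annulus

section Cutoff

variable {r ρ ε t : ℝ}

theorem annulusCutoff_nonneg : 0 ≤ annulusCutoff r ρ ε t :=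
  le_min zero_le_one (le_max_left _ _)

theorem annulusCutoff_le_one : annulusCutoff r ρ ε t ≤ 1 :=
  min_le_left _ _

theorem annulusCutoff_eq_zero (hr : 0 < r) (hε : ε < 1) (ht : r ≤ |t - ρ|) :
    annulusCutoff r ρ ε t = 0 := by
  have hc : 0 < (1 - ε) * r := mul_pos (by linarith) hr
  rw [annulusCutoff, max_eq_left (div_nonpos_of_nonpos_of_nonneg (by linarith) hc.le),
    min_eq_right zero_le_one]

theorem annulusCutoff_eq_one (hr : 0 < r) (hε : ε < 1) (ht : |t - ρ| ≤ ε * r) :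
    annulusCutoff r ρ ε t = 1 := by
  have hc : 0 < (1 - ε) * r := mul_pos (by linarith) hr
  have h : 1 ≤ (r - |t - ρ|) / ((1 - ε) * r) := by rw [le_div_iff₀ hc]; linarith
  rw [annulusCutoff, min_eq_left (h.trans (le_max_right _ _))]

theorem annulusCutoff_eventuallyEq_zero (hr : 0 < r) (hε : ε < 1) (ht : r < |t - ρ|) :
    annulusCutoff r ρ ε =ᶠ[𝓝 t] fun _ => 0 := by
  have hcont : Continuous fun s : ℝ => |s - ρ| := (continuous_id.sub continuous_const).abs
  filter_upwards [continuousAt_const.eventually_lt hcont.continuousAt ht] with s hs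
  exact annulusCutoff_eq_zero hr hε hs.le

theorem annulusCutoff_eventuallyEq_one (hr : 0 < r) (hε : ε < 1) (ht : |t - ρ| < ε * r) :
    annulusCutoff r ρ ε =ᶠ[𝓝 t] fun _ => 1 := by
  have hcont : Continuous fun s : ℝ => |s - ρ| := (continuous_id.sub continuous_const).abs
  filter_upwards [hcont.continuousAt.eventually_lt continuousAt_const ht] with s hs
  exact annulusCutoff_eq_one hr hε hs.le

theorem lipschitzWith_annulusCutoff (hr : 0 < r) (hε : ε < 1) :
    LipschitzWith (1 / ((1 - ε) * r)).toNNReal (annulusCutoff r ρ ε) := by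
  have hc : 0 < (1 - ε) * r := mul_pos (by linarith) hr
  have hclamp : LipschitzWith 1 fun s : ℝ => min 1 (max 0 s) :=
    (LipschitzWith.id.const_max 0).const_min 1
  have hramp : LipschitzWith (1 / ((1 - ε) * r)).toNNReal
      fun s : ℝ => (r - |s - ρ|) / ((1 - ε) * r) := by
    refine LipschitzWith.of_dist_le_mul fun s u => ?_
    rw [Real.coe_toNNReal _ (by positivity), Real.dist_eq, Real.dist_eq, ← sub_div, abs_div,
      abs_of_pos hc, one_div, ← div_eq_inv_mul]
    refine div_le_div_of_nonneg_right ?_ hc.le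
    calc |r - |s - ρ| - (r - |u - ρ|)| = |(|u - ρ| - |s - ρ|)| := by ring_nf
      _ ≤ |u - ρ - (s - ρ)| := abs_abs_sub_abs_le_abs_sub _ _
      _ = |s - u| := by rw [abs_sub_comm]; ring_nf
  rw [← one_mul (1 / ((1 - ε) * r)).toNNReal]
  exact hclamp.comp hramp

end Cutoff

theorem lipschitzWith_annulusCutoff_norm_sub {E : Type*} [SeminormedAddCommGroup E] {r ρ ε : ℝ}
    (hr : 0 < r) (hε : ε < 1) (σ₀ : E) :
    LipschitzWith (1 / ((1 - ε) * r)).toNNReal fun y => annulusCutoff r ρ ε ‖y - σ₀‖ := by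
  have h := (lipschitzWith_annulusCutoff (ρ := ρ) hr hε).comp
    (lipschitzWith_one_norm.comp (IsometryEquiv.subRight σ₀).isometry.lipschitz)
  rwa [mul_one, mul_one] at h

section Gradient

variable {E : Type*} [NormedAddCommGroup E] [InnerProductSpace ℝ E] [CompleteSpace E]
  {r ρ ε : ℝ} {σ₀ x : E}

theorem norm_gradient_le_of_lipschitzWith {f : E → ℝ} {K : NNReal} (hf : LipschitzWith K f)
    (x : E) : ‖gradient f x‖ ≤ K := by
  rw [← (InnerProductSpace.toDual ℝ E).norm_map, toDual_gradient]
  exact norm_fderiv_le_of_lipschitz ℝ hf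

theorem gradient_comp_norm_sub_eq_zero {f : ℝ → ℝ} {k : ℝ}
    (hf : f =ᶠ[𝓝 ‖x - σ₀‖] fun _ => k) : gradient (fun y => f ‖y - σ₀‖) x = 0 := by
  have hcont : Continuous fun y : E => ‖y - σ₀‖ := (continuous_id.sub continuous_const).norm
  exact (hf.comp_tendsto (hcont.tendsto x)).gradient_eq.trans (gradient_fun_const x k)

theorem norm_gradient_annulusCutoff_le (hr : 0 < r) (hε : ε < 1) (σ₀ x : E) :
    ‖gradient (fun y => annulusCutoff r ρ ε ‖y - σ₀‖) x‖ ≤ 1 / ((1 - ε) * r) := by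
  have hc : 0 < (1 - ε) * r := mul_pos (by linarith) hr
  simpa only [Real.coe_toNNReal _ (one_div_pos.2 hc).le] using
    norm_gradient_le_of_lipschitzWith (lipschitzWith_annulusCutoff_norm_sub hr hε σ₀) x

theorem gradient_annulusCutoff_eq_zero (hr : 0 < r) (hε : ε < 1)
    (hx : |‖x - σ₀‖ - ρ| ≠ r) (hxA : x ∉ annulus σ₀ r ρ \ annulus σ₀ (ε * r) ρ) :
    gradient (fun y => annulusCutoff r ρ ε ‖y - σ₀‖) x = 0 := by
  rw [Set.mem_sdiff, not_and, not_not, mem_annulus_iff, mem_annulus_iff] at hxA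
  by_cases hin : |‖x - σ₀‖ - ρ| < r
  · exact gradient_comp_norm_sub_eq_zero (annulusCutoff_eventuallyEq_one hr hε (hxA hin))
  · exact gradient_comp_norm_sub_eq_zero
      (annulusCutoff_eventuallyEq_zero hr hε (lt_of_le_of_ne (not_lt.1 hin) hx.symm))

end Gradient

section Measure

variable {E : Type*} [NormedAddCommGroup E] [InnerProductSpace ℝ E] [FiniteDimensional ℝ E]
  [MeasurableSpace E] [BorelSpace E] (μ : Measure E) [μ.IsAddHaarMeasure] {r ρ ε : ℝ}

theorem ae_abs_norm_sub_sub_ne (σ₀ : E) (h₁ : ρ + r ≠ 0) (h₂ : ρ - r ≠ 0) :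
    ∀ᵐ x ∂μ, |‖x - σ₀‖ - ρ| ≠ r := by
  refine measure_mono_null (fun x hx => ?_) (measure_union_null
    (Measure.addHaar_sphere_of_ne_zero μ σ₀ h₁) (Measure.addHaar_sphere_of_ne_zero μ σ₀ h₂))
  rcases eq_or_eq_neg_of_abs_eq (not_not.1 hx) with h | h
  · exact Or.inl (mem_sphere_iff_norm.2 (by linarith))
  · exact Or.inr (mem_sphere_iff_norm.2 (by linarith))

theorem ae_gradient_annulusCutoff_eq_zero (hr : 0 < r) (hrρ : r < ρ) (hε : ε < 1) (σ₀ : E) :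
    ∀ᵐ x ∂μ, x ∉ annulus σ₀ r ρ \ annulus σ₀ (ε * r) ρ →
      gradient (fun y => annulusCutoff r ρ ε ‖y - σ₀‖) x = 0 := by
  have hsph := ae_abs_norm_sub_sub_ne μ σ₀ (r := r) (ρ := ρ) (by linarith) (by linarith)
  filter_upwards [hsph] with x hx
  exact gradient_annulusCutoff_eq_zero hr hε hx

theorem integral_energy_annulusCutoff_le (hr : 0 < r) (hrρ : r < ρ) (hε : ε < 1) (σ₀ : E) :
    ∫ x, (‖gradient (fun y => annulusCutoff r ρ ε ‖y - σ₀‖) x‖ ^ 2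
        + annulusCutoff r ρ ε ‖x - σ₀‖ ^ 2) ∂μ ≤
      (1 + 1 / ((1 - ε) ^ 2 * r ^ 2)) * μ.real (annulus σ₀ r ρ) := by
  set w := fun y : E => annulusCutoff r ρ ε ‖y - σ₀‖
  set A := annulus σ₀ r ρ
  set C := 1 + 1 / ((1 - ε) ^ 2 * r ^ 2)
  have hbound : ∀ᵐ x ∂μ, ‖gradient w x‖ ^ 2 + w x ^ 2 ≤ A.indicator (fun _ => C) x := by
    filter_upwards [ae_gradient_annulusCutoff_eq_zero μ hr hrρ hε σ₀] with x hx
    by_cases hxA : x ∈ A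
    · have hgrad := pow_le_pow_left₀ (norm_nonneg _)
        (norm_gradient_annulusCutoff_le (ρ := ρ) hr hε σ₀ x) 2
      have hw : w x ^ 2 ≤ 1 := pow_le_one₀ annulusCutoff_nonneg annulusCutoff_le_one
      rw [indicator_of_mem hxA]
      calc _ ≤ (1 / ((1 - ε) * r)) ^ 2 + 1 := add_le_add hgrad hw
        _ = C := by rw [div_pow, one_pow, mul_pow, add_comm]
    · have hw : w x = 0 :=
        annulusCutoff_eq_zero hr hε (not_lt.1 (mt mem_annulus_iff.2 hxA))
      rw [indicator_of_notMem hxA, hx (fun h => hxA h.1), hw]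
      simp
  have hA_fin : μ A < ⊤ := (measure_mono annulus_subset_ball).trans_lt measure_ball_lt_top
  calc _ ≤ ∫ x, A.indicator (fun _ => C) x ∂μ :=
        integral_mono_of_nonneg (ae_of_all _ fun x => by positivity)
          ((integrableOn_const hA_fin.ne).integrable_indicator isOpen_annulus.measurableSet) hbound
    _ = C * μ.real A := by
        rw [integral_indicator_const C isOpen_annulus.measurableSet, smul_eq_mul, mul_comm]

end Measure

theorem stmt_10_general (d : ℕ) (σ₀ : EuclideanSpace ℝ (Fin d)) (r ρ ε : ℝ)
    (hr : 0 < r) (hrρ : r < ρ) (hε : ε ∈ Set.Ico (1 / 2 : ℝ) 1)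
    (w : EuclideanSpace ℝ (Fin d) → ℝ)
    (hw : ∀ x, w x = min 1 (max 0 ((r - |‖x - σ₀‖ - ρ|) / ((1 - ε) * r)))) :
    (∃ K : NNReal, LipschitzWith K w) ∧
    (∀ᵐ x ∂volume, DifferentiableAt ℝ w x) ∧
    (∀ᵐ x ∂volume, ‖gradient w x‖ ≤ 1 / ((1 - ε) * r)) ∧
    (∀ᵐ x ∂volume,
      x ∉ {y : EuclideanSpace ℝ (Fin d) | ρ - r < ‖y - σ₀‖ ∧ ‖y - σ₀‖ < r + ρ} \
          {y : EuclideanSpace ℝ (Fin d) | ρ - ε * r < ‖y - σ₀‖ ∧ ‖y - σ₀‖ < ε * r + ρ} →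
        gradient w x = 0) ∧
    ∫ x, (‖gradient w x‖ ^ 2 + w x ^ 2) ∂volume ≤
      (1 + 1 / ((1 - ε) ^ 2 * r ^ 2)) *
        (volume {y : EuclideanSpace ℝ (Fin d) |
          ρ - r < ‖y - σ₀‖ ∧ ‖y - σ₀‖ < r + ρ}).toReal := by
  obtain rfl : w = fun x => annulusCutoff r ρ ε ‖x - σ₀‖ := funext hw
  have hlip := lipschitzWith_annulusCutoff_norm_sub (ρ := ρ) hr hε.2 σ₀
  exact ⟨⟨_, hlip⟩, hlip.ae_differentiableAt,
    ae_of_all _ (norm_gradient_annulusCutoff_le hr hε.2 σ₀),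
    ae_gradient_annulusCutoff_eq_zero volume hr hrρ hε.2 σ₀,
    integral_energy_annulusCutoff_le volume hr hrρ hε.2 σ₀⟩

/-- Let `σ₀ ∈ ℝ^d` (`d ≥ 1`), `0 < r < ρ`, `ε ∈ [1/2, 1)` and
`w(x) = min{1, max{0, (r − |‖x−σ₀‖ − ρ|)/((1−ε)r)}}`. Then `w` is Lipschitz, hence
differentiable a.e.; its gradient satisfies `‖∇w‖ ≤ 1/((1−ε)r)` a.e. and `∇w = 0`
a.e. outside `A_r^ρ(σ₀) ∖ A_{εr}^ρ(σ₀)`; and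
`∫ (‖∇w‖² + w²) ≤ (1 + 1/((1−ε)²r²)) · vol(A_r^ρ(σ₀))`.
(Here `gradient w x = 0` automatically at points of non-differentiability.) -/
theorem stmt_10 (d : ℕ) (hd : 1 ≤ d) (σ₀ : EuclideanSpace ℝ (Fin d)) (r ρ ε : ℝ)
    (hr : 0 < r) (hrρ : r < ρ) (hε : ε ∈ Set.Ico (1 / 2 : ℝ) 1)
    (w : EuclideanSpace ℝ (Fin d) → ℝ)
    (hw : ∀ x, w x = min 1 (max 0 ((r - |‖x - σ₀‖ - ρ|) / ((1 - ε) * r)))) :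
    (∃ K : NNReal, LipschitzWith K w) ∧
    (∀ᵐ x ∂volume, DifferentiableAt ℝ w x) ∧
    (∀ᵐ x ∂volume, ‖gradient w x‖ ≤ 1 / ((1 - ε) * r)) ∧
    (∀ᵐ x ∂volume,
      x ∉ {y : EuclideanSpace ℝ (Fin d) | ρ - r < ‖y - σ₀‖ ∧ ‖y - σ₀‖ < r + ρ} \
          {y : EuclideanSpace ℝ (Fin d) | ρ - ε * r < ‖y - σ₀‖ ∧ ‖y - σ₀‖ < ε * r + ρ} →
        gradient w x = 0) ∧
    ∫ x, (‖gradient w x‖ ^ 2 + w x ^ 2) ∂volume ≤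
      (1 + 1 / ((1 - ε) ^ 2 * r ^ 2)) *
        (volume {y : EuclideanSpace ℝ (Fin d) |
          ρ - r < ‖y - σ₀‖ ∧ ‖y - σ₀‖ < r + ρ}).toReal :=
  stmt_10_general d σ₀ r ρ ε hr hrρ hε w hw
end

section
/- Let (X, μ) be a measure space and let S' ⊆ S be measurable subsets of X with μ(S) < +∞. Let α : X → [0,∞) be measurable and essentially bounded with α ≥ α₀ almost everywhere on S' for some α₀ > 0. Let w : X → ℝ be measurable with 0 ≤ w ≤ 1 everywhere, w = 1 almost everywhere on S', and w = 0 almost everywhere on X ∖ S. Let F : [0,∞) → ℝ be continuous with F(0) = 0, and let t₀ > 0 with F(t₀) > 0. Then the function σ ↦ α(σ) F(t₀ w(σ)) is μ-integrable and ∫_X α(σ) F(t₀ w(σ)) dμ ≥ α₀ F(t₀) μ(S') − ‖α‖_∞ ( sup_{t ∈ (0,t₀]} |F(t)| ) μ(S ∖ S'). -/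
open MeasureTheory Set

/-!
Since `0 ≤ t₀ w ≤ t₀`, the integrand is bounded a.e. by `‖α‖_∞ · sup_{(0,t₀]} |F|` (the value
`t = 0` costs nothing as `F 0 = 0`), and it vanishes a.e. off `S`, which has finite measure; this
gives integrability and reduces the integral to `S = S' ∪ (S ∖ S')`. On `S'` the integrand is
`α F(t₀) ≥ α₀ F(t₀)`, and on `S ∖ S'` it is at least minus the bound above.
-/

lemma abs_le_sSup_abs_image_Ioc {F : ℝ → ℝ} {a b t : ℝ} (hF : ContinuousOn F (Icc a b))
    (hFa : F a = 0) (ht : t ∈ Icc a b) : |F t| ≤ sSup ((fun t => |F t|) '' Ioc a b) := by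
  rcases ht.1.eq_or_lt with rfl | hat
  · rw [hFa, abs_zero]
    exact Real.sSup_nonneg (by rintro _ ⟨s, -, rfl⟩; exact abs_nonneg _)
  · have hbdd : BddAbove ((fun t => |F t|) '' Icc a b) := isCompact_Icc.bddAbove_image hF.abs
    exact le_csSup (hbdd.mono (image_mono Ioc_subset_Icc_self)) ⟨t, ⟨hat, ht.2⟩, rfl⟩

lemma ContinuousOn.measurable_comp {α β γ : Type*} [MeasurableSpace α] [TopologicalSpace β]
    [MeasurableSpace β] [OpensMeasurableSpace β] [TopologicalSpace γ] [MeasurableSpace γ]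
    [BorelSpace γ] {F : β → γ} {s : Set β} {g : α → β} (hF : ContinuousOn F s)
    (hg : Measurable g) (hgs : ∀ x, g x ∈ s) : Measurable fun x => F (g x) :=
  hF.domRestrict.measurable.comp (hg.subtype_mk (h := hgs))

section SetIntegral

variable {X : Type*} [MeasurableSpace X] {μ : Measure X} {f : X → ℝ}

lemma mul_measureReal_le_setIntegral_of_ae_le {s : Set X} {c : ℝ} (hμs : μ s ≠ ⊤)
    (hf : IntegrableOn f s μ) (hcf : ∀ᵐ x ∂μ.restrict s, c ≤ f x) :
    c * μ.real s ≤ ∫ x in s, f x ∂μ :=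
  calc c * μ.real s = ∫ _ in s, c ∂μ := by rw [setIntegral_const, smul_eq_mul, mul_comm]
    _ ≤ ∫ x in s, f x ∂μ := setIntegral_mono_ae_restrict (integrableOn_const hμs) hf hcf

lemma sub_mul_measureReal_le_setIntegral {s t : Set X} {a b : ℝ} (ht : MeasurableSet t)
    (hts : t ⊆ s) (hμs : μ s ≠ ⊤) (hf : IntegrableOn f s μ)
    (hat : ∀ᵐ x ∂μ.restrict t, a ≤ f x) (hbst : ∀ᵐ x ∂μ.restrict (s \ t), -b ≤ f x) :
    a * μ.real t - b * μ.real (s \ t) ≤ ∫ x in s, f x ∂μ := by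
  rw [← integral_inter_add_sdiff ht hf, inter_eq_right.mpr hts]
  have hlow_t := mul_measureReal_le_setIntegral_of_ae_le (measure_ne_top_of_subset hts hμs)
    (hf.mono_set hts) hat
  have hlow_st := mul_measureReal_le_setIntegral_of_ae_le
    (measure_ne_top_of_subset sdiff_subset hμs) (hf.mono_set sdiff_subset) hbst
  linarith

end SetIntegral

theorem stmt_11_general {X : Type*} [MeasurableSpace X] (μ : Measure X)
    (S S' : Set X) (hS : MeasurableSet S) (hS' : MeasurableSet S') (hsub : S' ⊆ S)
    (hSfin : μ S < ⊤)
    (α : X → ℝ)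
    (hα_top : MemLp α ⊤ μ)
    (α₀ : ℝ) (hα_lb : ∀ᵐ σ ∂(μ.restrict S'), α₀ ≤ α σ)
    (w : X → ℝ) (hw_meas : Measurable w) (hw01 : ∀ σ, 0 ≤ w σ ∧ w σ ≤ 1)
    (hwS' : ∀ᵐ σ ∂(μ.restrict S'), w σ = 1)
    (hwout : ∀ᵐ σ ∂(μ.restrict Sᶜ), w σ = 0)
    (F : ℝ → ℝ) (hF_cont : ContinuousOn F (Set.Ici 0)) (hF0 : F 0 = 0)
    (t₀ : ℝ) (ht₀ : 0 < t₀) (hFt₀ : 0 < F t₀) :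
    Integrable (fun σ => α σ * F (t₀ * w σ)) μ ∧
      α₀ * F t₀ * (μ S').toReal -
          (eLpNorm α ⊤ μ).toReal * sSup ((fun t => |F t|) '' Set.Ioc 0 t₀) *
            (μ (S \ S')).toReal ≤
        ∫ σ, α σ * F (t₀ * w σ) ∂μ := by
  have hw_range : ∀ σ, t₀ * w σ ∈ Icc 0 t₀ := fun σ =>
    ⟨mul_nonneg ht₀.le (hw01 σ).1, mul_le_of_le_one_right ht₀.le (hw01 σ).2⟩
  have hα_bound : ∀ᵐ σ ∂μ, |α σ| ≤ (eLpNorm α ⊤ μ).toReal := by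
    rw [toReal_eLpNorm hα_top.1]
    exact ae_le_lpNorm_exponent_top hα_top
  have hg_bound : ∀ᵐ σ ∂μ, |α σ * F (t₀ * w σ)| ≤
      (eLpNorm α ⊤ μ).toReal * sSup ((fun t => |F t|) '' Set.Ioc 0 t₀) := by
    filter_upwards [hα_bound] with σ hσ
    rw [abs_mul]
    exact mul_le_mul hσ (abs_le_sSup_abs_image_Ioc (hF_cont.mono Icc_subset_Ici_self) hF0
      (hw_range σ)) (abs_nonneg _) ENNReal.toReal_nonneg
  have hg_off : ∀ᵐ σ ∂μ, σ ∉ S → α σ * F (t₀ * w σ) = 0 := by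
    filter_upwards [(ae_restrict_iff' hS.compl).mp hwout] with σ hσ hσS
    rw [hσ hσS, mul_zero, hF0, mul_zero]
  have hg_meas : AEStronglyMeasurable (fun σ => α σ * F (t₀ * w σ)) μ :=
    hα_top.1.mul (hF_cont.measurable_comp (measurable_const.mul hw_meas)
      fun σ => (hw_range σ).1).aestronglyMeasurable
  have hgS : IntegrableOn (fun σ => α σ * F (t₀ * w σ)) S μ :=
    Measure.integrableOn_of_bounded hSfin.ne hg_meas (ae_restrict_of_ae hg_bound)
  refine ⟨hgS.integrable_of_ae_notMem_eq_zero hg_off, ?_⟩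
  rw [← setIntegral_eq_integral_of_ae_compl_eq_zero hg_off]
  refine sub_mul_measureReal_le_setIntegral hS' hsub hSfin.ne hgS ?_ ?_
  · filter_upwards [hα_lb, hwS'] with σ hα hw
    rw [hw, mul_one]
    exact mul_le_mul_of_nonneg_right hα hFt₀.le
  · filter_upwards [ae_restrict_of_ae hg_bound] with σ hσ
    exact neg_le_of_abs_le hσ

/-- On a measure space `(X, μ)` with measurable `S' ⊆ S`, `μ(S) < ∞`,
`α ≥ 0` measurable essentially bounded with `α ≥ α₀ > 0` a.e. on `S'`, `w` measurable
with `0 ≤ w ≤ 1`, `w = 1` a.e. on `S'`, `w = 0` a.e. on `X ∖ S`, and `F : [0,∞) → ℝ`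
continuous with `F(0) = 0`, `t₀ > 0`, `F(t₀) > 0`: the function `σ ↦ α(σ) F(t₀ w(σ))`
is integrable and
`∫ α F(t₀ w) dμ ≥ α₀ F(t₀) μ(S') − ‖α‖_∞ (sup_{t ∈ (0,t₀]} |F(t)|) μ(S ∖ S')`. -/
theorem stmt_11 {X : Type*} [MeasurableSpace X] (μ : Measure X)
    (S S' : Set X) (hS : MeasurableSet S) (hS' : MeasurableSet S') (hsub : S' ⊆ S)
    (hSfin : μ S < ⊤)
    (α : X → ℝ) (hα_meas : Measurable α) (hα_nonneg : ∀ σ, 0 ≤ α σ)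
    (hα_top : MemLp α ⊤ μ)
    (α₀ : ℝ) (hα₀ : 0 < α₀) (hα_lb : ∀ᵐ σ ∂(μ.restrict S'), α₀ ≤ α σ)
    (w : X → ℝ) (hw_meas : Measurable w) (hw01 : ∀ σ, 0 ≤ w σ ∧ w σ ≤ 1)
    (hwS' : ∀ᵐ σ ∂(μ.restrict S'), w σ = 1)
    (hwout : ∀ᵐ σ ∂(μ.restrict Sᶜ), w σ = 0)
    (F : ℝ → ℝ) (hF_cont : ContinuousOn F (Set.Ici 0)) (hF0 : F 0 = 0)
    (t₀ : ℝ) (ht₀ : 0 < t₀) (hFt₀ : 0 < F t₀) :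
    Integrable (fun σ => α σ * F (t₀ * w σ)) μ ∧
      α₀ * F t₀ * (μ S').toReal -
          (eLpNorm α ⊤ μ).toReal * sSup ((fun t => |F t|) '' Set.Ioc 0 t₀) *
            (μ (S \ S')).toReal ≤
        ∫ σ, α σ * F (t₀ * w σ) ∂μ :=
  stmt_11_general μ S S' hS hS' hsub hSfin α hα_top α₀ hα_lb w hw_meas hw01 hwS' hwout F hF_cont hF0
    t₀ ht₀ hFt₀
end

section
/- Let q > 2 and β, c, A, B be positive real numbers, and define h : [0,∞) → ℝ by h(γ) = (q/(βc)) · γ / ( q√2·A + 2^{q/2}·c^{q−1}·B·γ^{q−1} ) for γ > 0 and h(0) = 0. Then h(0) = 0, h(γ) → 0 as γ → +∞, h attains its maximum on [0,∞) at some γ* > 0, and max_{γ ≥ 0} h(γ) = (1/(2(q−1)βc²)) · ( q (q−2)^{q−2} / (A^{q−2} B) )^{1/(q−1)}. -/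
/-!
Write `h(γ) = K γ / (a + b γ^p)` with `p = q - 1 > 1`. The denominator outgrows `γ`, so
`h → 0`. Let `s > 0` solve `(p - 1) b s^p = a`. Bounding `γ^p` below by its tangent line at
`s` (Bernoulli) gives `γ (a + b s^p) ≤ s (a + b γ^p)`, so `s` is the maximiser, with
maximum `K (p - 1) s / (p a)`; unwinding `s = (a / ((p - 1) b))^(1/p)` yields the closed form.
-/

open Filter Topology

section DivAddMulRpow

variable {p a b : ℝ}

theorem tendsto_div_add_mul_rpow_atTop (hp : 1 < p) (hb : 0 < b) :
    Tendsto (fun x : ℝ => x / (a + b * x ^ p)) atTop (𝓝 0) := by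
  have hden : Tendsto (fun x : ℝ => a / x + b * x ^ (p - 1)) atTop atTop :=
    (tendsto_const_nhds.div_atTop tendsto_id).add_atTop
      ((tendsto_rpow_atTop (by linarith)).const_mul_atTop hb)
  refine (tendsto_congr' ?_).mp hden.inv_tendsto_atTop
  filter_upwards [eventually_gt_atTop 0] with x hx
  simp only [Pi.inv_apply]
  rw [Real.rpow_sub hx, Real.rpow_one]
  field_simp

theorem exists_pos_sub_one_mul_mul_rpow_eq (hp : 1 < p) (ha : 0 < a) (hb : 0 < b) :
    ∃ s : ℝ, 0 < s ∧ (p - 1) * b * s ^ p = a := by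
  have hx : 0 < a / ((p - 1) * b) := div_pos ha (mul_pos (by linarith) hb)
  refine ⟨(a / ((p - 1) * b)) ^ p⁻¹, Real.rpow_pos_of_pos hx _, ?_⟩
  rw [Real.rpow_inv_rpow hx.le (by linarith)]
  field_simp [(show p - 1 ≠ 0 by linarith), hb.ne']

theorem div_add_mul_rpow_le {s x : ℝ} (hp : 1 < p) (ha : 0 < a) (hb : 0 < b) (hs : 0 < s)
    (hbs : (p - 1) * b * s ^ p = a) (hx : 0 ≤ x) :
    x / (a + b * x ^ p) ≤ s / (a + b * s ^ p) := by
  have hsp : 0 < s ^ p := Real.rpow_pos_of_pos hs p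
  have tangent : s ^ p * (1 + p * (x / s - 1)) ≤ x ^ p := by
    have := one_add_mul_self_le_rpow_one_add (s := x / s - 1)
      (by linarith [div_nonneg hx hs.le]) hp.le
    rw [add_sub_cancel, Real.div_rpow hx hs.le, le_div_iff₀ hsp] at this
    linarith
  have hp1 : 0 < p - 1 := by linarith
  have key : a * s + p * a * (x - s) ≤ (p - 1) * b * s * x ^ p := by
    calc a * s + p * a * (x - s) = (p - 1) * b * s * (s ^ p * (1 + p * (x / s - 1))) := by
          rw [← hbs]; field_simp
      _ ≤ (p - 1) * b * s * x ^ p := by gcongr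
  rw [div_le_div_iff₀ (by positivity) (by positivity)]
  refine le_of_mul_le_mul_left ?_ hp1
  calc (p - 1) * (x * (a + b * s ^ p)) = p * a * x := by rw [← hbs]; ring
    _ ≤ (p - 1) * (s * (a + b * x ^ p)) := by linarith

theorem div_add_mul_rpow_eq {s : ℝ} (hp : 1 < p) (ha : 0 < a)
    (hbs : (p - 1) * b * s ^ p = a) :
    s / (a + b * s ^ p) = (p - 1) / (p * a) * s := by
  have hp1 : p - 1 ≠ 0 := by linarith
  have hp0 : p ≠ 0 := by linarith
  have hden : a + b * s ^ p = p * a / (p - 1) := by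
    field_simp
    linear_combination hbs
  rw [hden]
  field_simp

end DivAddMulRpow


theorem scaled_maximiser_eq_rpow {q c A B s : ℝ} (hq : 2 < q) (hc : 0 < c) (hA : 0 < A)
    (hB : 0 < B) (hs : 0 < s)
    (hbs : (q - 2) * (2 ^ (q / 2) * c ^ (q - 1) * B) * s ^ (q - 1) = q * √2 * A) :
    (q - 2) / A * (√2 * c * s) = (q * (q - 2) ^ (q - 2) / (A ^ (q - 2) * B)) ^ (1 / (q - 1)) := by
  have hq2 : 0 < q - 2 := by linarith
  have hsqrt : 0 < √2 := by positivity
  have two_rpow : (2 : ℝ) ^ (q / 2) = √2 ^ (q - 1) * √2 := by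
    rw [← Real.rpow_add_one hsqrt.ne', sub_add_cancel, Real.sqrt_eq_rpow,
      ← Real.rpow_mul zero_le_two, one_div_mul_eq_div]
  have split (x : ℝ) (hx : 0 < x) : x ^ (q - 1) = x ^ (q - 2) * x := by
    rw [← Real.rpow_add_one hx.ne']; ring_nf
  rw [one_div, Real.eq_rpow_inv (by positivity) (by positivity) (by linarith),
    Real.mul_rpow (by positivity) (by positivity), Real.mul_rpow (by positivity) hs.le,
    Real.mul_rpow hsqrt.le hc.le, Real.div_rpow hq2.le hA.le, split _ hq2, split _ hA]
  rw [two_rpow] at hbs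
  field_simp
  refine mul_right_cancel₀ hsqrt.ne' ?_
  linear_combination hbs

theorem maximum_value_eq {q β c A B s : ℝ} (hq : 2 < q) (hβ : 0 < β) (hc : 0 < c) (hA : 0 < A)
    (hB : 0 < B) (hs : 0 < s)
    (hbs : (q - 2) * (2 ^ (q / 2) * c ^ (q - 1) * B) * s ^ (q - 1) = q * √2 * A) :
    q / (β * c) * ((q - 2) / ((q - 1) * (q * √2 * A)) * s) =
      1 / (2 * (q - 1) * β * c ^ 2) *
        (q * (q - 2) ^ (q - 2) / (A ^ (q - 2) * B)) ^ (1 / (q - 1)) := by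
  rw [← scaled_maximiser_eq_rpow hq hc hA hB hs hbs]
  have hq1 : q - 1 ≠ 0 := by linarith
  have hq0 : q ≠ 0 := by linarith
  field_simp
  rw [Real.sq_sqrt zero_le_two]
  ring

/-- Let `q > 2` and `β, c, A, B > 0`, and let
`h(γ) = (q/(βc)) γ / (q√2 A + 2^(q/2) c^(q−1) B γ^(q−1))` for `γ ≥ 0` (so `h(0) = 0`).
Then `h(0) = 0`, `h(γ) → 0` as `γ → +∞`, `h` attains its maximum on `[0,∞)` at some
`γ* > 0`, and `max_{γ≥0} h(γ) = (1/(2(q−1)βc²)) (q (q−2)^(q−2) / (A^(q−2) B))^(1/(q−1))`. -/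
theorem stmt_14 (q β c A B : ℝ) (hq : 2 < q) (hβ : 0 < β) (hc : 0 < c)
    (hA : 0 < A) (hB : 0 < B) (h : ℝ → ℝ)
    (hdef : ∀ γ : ℝ, 0 ≤ γ →
      h γ = q / (β * c) * γ /
        (q * Real.sqrt 2 * A + 2 ^ (q / 2) * c ^ (q - 1) * B * γ ^ (q - 1))) :
    h 0 = 0 ∧
    Tendsto h atTop (𝓝 0) ∧
    ∃ γs : ℝ, 0 < γs ∧ (∀ γ : ℝ, 0 ≤ γ → h γ ≤ h γs) ∧
      h γs = 1 / (2 * (q - 1) * β * c ^ 2) *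
        (q * (q - 2) ^ (q - 2) / (A ^ (q - 2) * B)) ^ (1 / (q - 1)) := by
  set a := q * √2 * A
  set b := 2 ^ (q / 2) * c ^ (q - 1) * B
  have hp : 1 < q - 1 := by linarith
  have ha : 0 < a := by positivity
  have hb : 0 < b := by positivity
  have hh (γ : ℝ) (hγ : 0 ≤ γ) : h γ = q / (β * c) * (γ / (a + b * γ ^ (q - 1))) := by
    rw [hdef γ hγ, mul_div_assoc]
  obtain ⟨s, hs, hbs⟩ := exists_pos_sub_one_mul_mul_rpow_eq hp ha hb
  have hbs' : (q - 2) * b * s ^ (q - 1) = a := by rw [← hbs]; ring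
  refine ⟨by simp [hdef 0 le_rfl], ?_, s, hs, fun γ hγ => ?_, ?_⟩
  · have hlim := (tendsto_div_add_mul_rpow_atTop (a := a) hp hb).const_mul (q / (β * c))
    rw [mul_zero] at hlim
    refine hlim.congr' ?_
    filter_upwards [eventually_ge_atTop 0] with γ hγ using (hh γ hγ).symm
  · rw [hh γ hγ, hh s hs.le]
    exact mul_le_mul_of_nonneg_left (div_add_mul_rpow_le hp ha hb hs hbs hγ) (by positivity)
  · rw [hh s hs.le, div_add_mul_rpow_eq hp ha hbs, show q - 1 - 1 = q - 2 by ring]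
    exact maximum_value_eq hq hβ hc hA hB hs hbs'
end

section
/- Let q > 2 and β, c, A, B be positive real numbers, and set λ_⋆ := (1/(2(q−1)βc²)) · ( q (q−2)^{q−2} / (A^{q−2} B) )^{1/(q−1)}. Then for every λ ∈ (0, λ_⋆) there exists γ̄ > 0 such that c·β·( √2·A/γ̄ + (2^{q/2} c^{q−1} / q)·B·γ̄^{q−2} ) < 1/λ. -/
/-!
The bracket has the shape `a / γ + b γ ^ s` with `s = q - 2`, whose minimum over `γ > 0` is
`(s + 1) (a ^ s b / s ^ s) ^ (1 / (s + 1))`; for the given `a` and `b`, `c β` times this minimum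
is exactly `1 / λ⋆`, so every `λ < λ⋆` leaves room below `1 / λ`.
-/

open Real

theorem exists_div_add_mul_rpow_eq {a b s : ℝ} (ha : 0 < a) (hb : 0 < b) (hs : 0 < s) :
    ∃ x > 0, a / x + b * x ^ s = (s + 1) * (a ^ s * b / s ^ s) ^ (1 / (s + 1)) := by
  set m := (a ^ s * b / s ^ s) ^ (1 / (s + 1))
  have hm : 0 < m := by positivity
  have hm_pow : m ^ s * m = a ^ s * b / s ^ s := by
    rw [← rpow_add_one hm.ne', ← rpow_mul (by positivity), one_div,
      inv_mul_cancel₀ (by positivity), rpow_one]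
  -- the minimiser: here `a / x = s m` and `b x ^ s = m`
  refine ⟨a / (s * m), by positivity, ?_⟩
  have hpow : (a / (s * m)) ^ s = a ^ s / (s ^ s * m ^ s) := by
    rw [div_rpow ha.le (by positivity), mul_rpow hs.le hm.le]
  have hms : 0 < m ^ s := by positivity
  have hss : 0 < s ^ s := by positivity
  rw [hpow]
  field_simp
  rw [eq_div_iff hss.ne'] at hm_pow
  linear_combination -hm_pow

theorem rpow_one_div_mul_rpow_one_div_eq_two_mul {q c A B : ℝ} (hq : 2 < q) (hc : 0 < c)
    (hA : 0 < A) (hB : 0 < B) :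
    (q * (q - 2) ^ (q - 2) / (A ^ (q - 2) * B)) ^ (1 / (q - 1)) *
      ((√2 * A) ^ (q - 2) * (2 ^ (q / 2) * c ^ (q - 1) / q * B) / (q - 2) ^ (q - 2)) ^
        (1 / (q - 1)) = 2 * c := by
  have hs : 0 < q - 2 := by linarith
  have h2 : √2 ^ (q - 2) * 2 ^ (q / 2) = 2 ^ (q - 1) := by
    rw [sqrt_eq_rpow, ← rpow_mul zero_le_two, ← rpow_add zero_lt_two]
    ring_nf
  have hprod : q * (q - 2) ^ (q - 2) / (A ^ (q - 2) * B) *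
      ((√2 * A) ^ (q - 2) * (2 ^ (q / 2) * c ^ (q - 1) / q * B) / (q - 2) ^ (q - 2)) =
        (2 * c) ^ (q - 1) := by
    rw [mul_rpow (by positivity) hA.le, mul_rpow zero_le_two hc.le, ← h2]
    have : 0 < A ^ (q - 2) := by positivity
    have : 0 < (q - 2) ^ (q - 2) := by positivity
    field_simp
  rw [← mul_rpow (by positivity) (by positivity), hprod, ← rpow_mul (by positivity),
    one_div, mul_inv_cancel₀ (by linarith), rpow_one]

theorem stmt_15_general (q β c A B : ℝ) (hq : 2 < q) (hc : 0 < c)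
    (hA : 0 < A) (hB : 0 < B) (lam : ℝ) (hlam : 0 < lam)
    (hlt : lam < 1 / (2 * (q - 1) * β * c ^ 2) *
      (q * (q - 2) ^ (q - 2) / (A ^ (q - 2) * B)) ^ (1 / (q - 1))) :
    ∃ γ : ℝ, 0 < γ ∧
      c * β * (Real.sqrt 2 * A / γ + 2 ^ (q / 2) * c ^ (q - 1) / q * B * γ ^ (q - 2)) <
        1 / lam := by
  obtain ⟨γ, hγ, hmin⟩ := exists_div_add_mul_rpow_eq (s := q - 2) (a := √2 * A)
    (b := 2 ^ (q / 2) * c ^ (q - 1) / q * B) (by positivity) (by positivity) (by linarith)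
  refine ⟨γ, hγ, ?_⟩
  rw [show q - 2 + 1 = q - 1 by ring] at hmin
  set m := ((√2 * A) ^ (q - 2) * (2 ^ (q / 2) * c ^ (q - 1) / q * B) / (q - 2) ^ (q - 2)) ^
    (1 / (q - 1))
  have hm : 0 < m := by positivity
  have hthreshold := rpow_one_div_mul_rpow_one_div_eq_two_mul hq hc hA hB
  rw [← eq_div_iff hm.ne'] at hthreshold
  rw [hthreshold] at hlt
  calc c * β * (√2 * A / γ + 2 ^ (q / 2) * c ^ (q - 1) / q * B * γ ^ (q - 2))
      = 1 / (1 / (2 * (q - 1) * β * c ^ 2) * (2 * c / m)) := by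
        rw [hmin]; field_simp
    _ < 1 / lam := one_div_lt_one_div_of_lt hlam hlt

/-- Let `q > 2`, `β, c, A, B > 0` and
`λ⋆ = (1/(2(q−1)βc²)) (q (q−2)^(q−2) / (A^(q−2) B))^(1/(q−1))`. Then for every
`λ ∈ (0, λ⋆)` there exists `γ̄ > 0` with
`c β (√2 A/γ̄ + (2^(q/2) c^(q−1)/q) B γ̄^(q−2)) < 1/λ`. -/
theorem stmt_15 (q β c A B : ℝ) (hq : 2 < q) (hβ : 0 < β) (hc : 0 < c)
    (hA : 0 < A) (hB : 0 < B) (lam : ℝ) (hlam : 0 < lam)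
    (hlt : lam < 1 / (2 * (q - 1) * β * c ^ 2) *
      (q * (q - 2) ^ (q - 2) / (A ^ (q - 2) * B)) ^ (1 / (q - 1))) :
    ∃ γ : ℝ, 0 < γ ∧
      c * β * (Real.sqrt 2 * A / γ + 2 ^ (q / 2) * c ^ (q - 1) / q * B * γ ^ (q - 2)) <
        1 / lam :=
  stmt_15_general q β c A B hq hc hA hB lam hlam hlt
end

section
/- Let (X, μ) be a measure space and let S' ⊆ S be measurable subsets of X with μ(S) < +∞ and μ(S') > 0. Let α : X → [0,∞) be measurable and essentially bounded with α ≥ α₀ almost everywhere on S' for some α₀ > 0. Let w : X → ℝ be measurable with 0 ≤ w ≤ 1 everywhere, w = 1 almost everywhere on S', and w = 0 almost everywhere on X ∖ S. Let F : [0,∞) → ℝ be continuous with F(0) = 0, liminf_{t→0⁺} F(t)/t² > −∞ and limsup_{t→0⁺} F(t)/t² = +∞. Then limsup_{t→0⁺} (1/t²) ∫_X α(σ) F(t·w(σ)) dμ = +∞. -/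
open MeasureTheory Filter Topology Set

/-! On `S'` the integrand is `α F(t) ≥ α₀ F(t)`, while everywhere else the liminf
hypothesis gives `F(t w) ≥ m t²` for some `m ≤ 0`, and the integrand vanishes off `S`.
Hence `(1/t²) ∫ α F(t w) ≥ α₀ μ(S') F(t)/t² + m ‖α‖_∞ μ(S)`, an affine function of
`F(t)/t²` with positive slope, which is frequently as large as we please. -/

theorem ContinuousOn.measurable_comp_of_forall_mem {X β γ : Type*} [MeasurableSpace X]
    [TopologicalSpace β] [MeasurableSpace β] [OpensMeasurableSpace β]
    [TopologicalSpace γ] [MeasurableSpace γ] [BorelSpace γ]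
    {F : β → γ} {s : Set β} (hF : ContinuousOn F s) {g : X → β} (hg : Measurable g)
    (hgs : ∀ x, g x ∈ s) : Measurable fun x ↦ F (g x) :=
  hF.domRestrict.measurable.comp (hg.subtype_mk (h := hgs))

theorem exists_nonpos_eventually_forall_Icc_mul_sq_le {F : ℝ → ℝ} (hF0 : F 0 = 0)
    (h : ∃ m : ℝ, ∀ᶠ t in 𝓝[>] (0 : ℝ), m ≤ F t / t ^ 2) :
    ∃ m ≤ (0 : ℝ), ∀ᶠ t in 𝓝[>] (0 : ℝ), ∀ u ∈ Icc 0 t, m * t ^ 2 ≤ F u := by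
  obtain ⟨m₀, hm₀⟩ := h
  obtain ⟨δ, hδ, hδm₀⟩ := mem_nhdsGT_iff_exists_Ioo_subset.1 hm₀
  refine ⟨min m₀ 0, min_le_right _ _, ?_⟩
  filter_upwards [Ioo_mem_nhdsGT hδ] with t ⟨_, htδ⟩ u ⟨hu0, hut⟩
  have hm_t : min m₀ 0 * t ^ 2 ≤ min m₀ 0 * u ^ 2 :=
    mul_le_mul_of_nonpos_left (pow_le_pow_left₀ hu0 hut 2) (min_le_right _ _)
  rcases hu0.eq_or_lt with rfl | hu
  · simpa [hF0] using hm_t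
  · calc min m₀ 0 * t ^ 2 ≤ min m₀ 0 * u ^ 2 := hm_t
      _ ≤ m₀ * u ^ 2 := mul_le_mul_of_nonneg_right (min_le_left _ _) (sq_nonneg u)
      _ ≤ F u := (le_div_iff₀ (by positivity)).1 (hδm₀ ⟨hu, hut.trans_lt htδ⟩)

section Integral

variable {X : Type*} [MeasurableSpace X] {μ : Measure X} {S S' : Set X}

theorem integrable_mul_of_memLp_top_of_bounded {𝕜 : Type*} [NormedRing 𝕜] {α g : X → 𝕜}
    (hα : MemLp α ⊤ μ) (hg : AEStronglyMeasurable g μ) {K : ℝ}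
    (hgK : ∀ᵐ x ∂μ, ‖g x‖ ≤ K) (hSfin : μ S ≠ ⊤) (hg0 : ∀ᵐ x ∂μ, x ∉ S → g x = 0) :
    Integrable (fun x ↦ α x * g x) μ :=
  ((Measure.integrableOn_of_bounded hSfin hg (ae_restrict_of_ae hgK))
    |>.integrable_of_ae_notMem_eq_zero hg0).mul_of_top_right hα

theorem le_integral_mul_of_ae_bounds {α g : X → ℝ} (hS : MeasurableSet S)
    (hS' : MeasurableSet S') (hsub : S' ⊆ S) (hSfin : μ S ≠ ⊤)
    (hint : Integrable (fun x ↦ α x * g x) μ) {A α₀ b c : ℝ}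
    (hα_nonneg : ∀ᵐ x ∂μ, 0 ≤ α x) (hαA : ∀ᵐ x ∂μ, α x ≤ A)
    (hα₀ : ∀ᵐ x ∂μ.restrict S', α₀ ≤ α x) (hb : 0 ≤ b) (hgb : ∀ᵐ x ∂μ.restrict S', g x = b)
    (hc : c ≤ 0) (hgc : ∀ᵐ x ∂μ, c ≤ g x) (hg0 : ∀ᵐ x ∂μ, x ∉ S → g x = 0) :
    α₀ * b * μ.real S' + A * c * μ.real S ≤ ∫ x, α x * g x ∂μ := by
  have hS'fin : μ S' ≠ ⊤ := measure_ne_top_of_subset hsub hSfin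
  have hb_int := (integrableOn_const (C := α₀ * b) hS'fin).integrable_indicator hS'
  have hc_int := (integrableOn_const (C := A * c) hSfin).integrable_indicator hS
  set φ : X → ℝ := fun x ↦ S'.indicator (fun _ ↦ α₀ * b) x + S.indicator (fun _ ↦ A * c) x
  have hφ_le : φ ≤ᵐ[μ] fun x ↦ α x * g x := by
    rw [ae_restrict_iff' hS'] at hα₀ hgb
    filter_upwards [hα_nonneg, hαA, hα₀, hgb, hgc, hg0] with x hx0 hxA hxα₀ hxb hxc hx
    by_cases hx' : x ∈ S'
    · simp only [φ, indicator_of_mem hx', indicator_of_mem (hsub hx'), hxb hx']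
      have hAc : A * c ≤ 0 := mul_nonpos_of_nonneg_of_nonpos (hx0.trans hxA) hc
      linarith [mul_le_mul_of_nonneg_right (hxα₀ hx') hb]
    by_cases hxS : x ∈ S
    · simp only [φ, indicator_of_notMem hx', indicator_of_mem hxS, zero_add]
      calc A * c ≤ α x * c := mul_le_mul_of_nonpos_right hxA hc
        _ ≤ α x * g x := mul_le_mul_of_nonneg_left hxc hx0
    · simp [φ, hx', hxS, hx hxS]
  calc α₀ * b * μ.real S' + A * c * μ.real S = ∫ x, φ x ∂μ := by
        rw [integral_add hb_int hc_int, integral_indicator_const _ hS',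
          integral_indicator_const _ hS, smul_eq_mul, smul_eq_mul]
        ring
    _ ≤ ∫ x, α x * g x ∂μ := integral_mono_ae (hb_int.add hc_int) hint hφ_le

end Integral

theorem frequently_lt_of_eventually_affine_le {ι : Type*} {l : Filter ι} {f g : ι → ℝ}
    (hf : ∀ M, ∃ᶠ i in l, M < f i) {a b : ℝ} (ha : 0 < a)
    (hfg : ∀ᶠ i in l, 0 ≤ f i → a * f i + b ≤ g i) : ∀ M, ∃ᶠ i in l, M < g i := by
  intro M
  refine ((hf (max 0 ((M - b) / a))).and_eventually hfg).mono ?_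
  rintro i ⟨hi, hfg_i⟩
  have hMb : M - b < a * f i := (div_lt_iff₀' ha).1 ((le_max_right _ _).trans_lt hi)
  linarith [hfg_i ((le_max_left _ _).trans hi.le)]

theorem stmt_17_general {X : Type*} [MeasurableSpace X] (μ : Measure X)
    (S S' : Set X) (hS : MeasurableSet S) (hS' : MeasurableSet S') (hsub : S' ⊆ S)
    (hSfin : μ S < ⊤) (hS'pos : 0 < μ S')
    (α : X → ℝ) (hα_nonneg : ∀ σ, 0 ≤ α σ)
    (hα_top : MemLp α ⊤ μ)
    (α₀ : ℝ) (hα₀ : 0 < α₀) (hα_lb : ∀ᵐ σ ∂(μ.restrict S'), α₀ ≤ α σ)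
    (w : X → ℝ) (hw_meas : Measurable w) (hw01 : ∀ σ, 0 ≤ w σ ∧ w σ ≤ 1)
    (hwS' : ∀ᵐ σ ∂(μ.restrict S'), w σ = 1)
    (hwout : ∀ᵐ σ ∂(μ.restrict Sᶜ), w σ = 0)
    (F : ℝ → ℝ) (hF_cont : ContinuousOn F (Set.Ici 0)) (hF0 : F 0 = 0)
    (hliminf : ∃ m : ℝ, ∀ᶠ t in 𝓝[>] (0 : ℝ), m ≤ F t / t ^ 2)
    (hlimsup : ∀ M : ℝ, ∃ᶠ t in 𝓝[>] (0 : ℝ), M < F t / t ^ 2) :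
    ∀ M : ℝ, ∃ᶠ t in 𝓝[>] (0 : ℝ), M < 1 / t ^ 2 * ∫ σ, α σ * F (t * w σ) ∂μ := by
  obtain ⟨m, hm, hFm⟩ := exists_nonpos_eventually_forall_Icc_mul_sq_le hF0 hliminf
  set A := lpNorm α ⊤ μ
  have hαA : ∀ᵐ σ ∂μ, α σ ≤ A :=
    (ae_le_lpNorm_exponent_top hα_top).mono fun σ h ↦ (Real.le_norm_self _).trans h
  have hS'real : 0 < μ.real S' :=
    ENNReal.toReal_pos hS'pos.ne' (measure_ne_top_of_subset hsub hSfin.ne)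
  refine frequently_lt_of_eventually_affine_le hlimsup (mul_pos hα₀ hS'real)
    (b := m * A * μ.real S) ?_
  filter_upwards [hFm, self_mem_nhdsWithin] with t hFm_t (ht : 0 < t) hFt_div
  have hFt : 0 ≤ F t := by simpa [ht.ne'] using mul_nonneg hFt_div (sq_nonneg t)
  have htw : ∀ σ, t * w σ ∈ Icc 0 t := fun σ ↦
    ⟨mul_nonneg ht.le (hw01 σ).1, mul_le_of_le_one_right ht.le (hw01 σ).2⟩
  have hw0 : ∀ᵐ σ ∂μ, σ ∉ S → F (t * w σ) = 0 := by
    filter_upwards [(ae_restrict_iff' hS.compl).1 hwout] with σ hσ hσS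
    rw [hσ hσS, mul_zero, hF0]
  obtain ⟨K, hK⟩ := isCompact_Icc.exists_bound_of_continuousOn (hF_cont.mono Icc_subset_Ici_self)
  have hFtw_meas : Measurable fun σ ↦ F (t * w σ) :=
    hF_cont.measurable_comp_of_forall_mem (hw_meas.const_mul t) fun σ ↦ (htw σ).1
  have hint := integrable_mul_of_memLp_top_of_bounded hα_top hFtw_meas.aestronglyMeasurable
    (ae_of_all _ fun σ ↦ hK _ (htw σ)) hSfin.ne hw0
  have key := le_integral_mul_of_ae_bounds hS hS' hsub hSfin.ne hint (ae_of_all _ hα_nonneg)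
    hαA hα_lb hFt (hwS'.mono fun σ h ↦ by rw [h, mul_one])
    (mul_nonpos_of_nonpos_of_nonneg hm (sq_nonneg t)) (ae_of_all _ fun σ ↦ hFm_t _ (htw σ)) hw0
  rw [one_div, inv_mul_eq_div, le_div_iff₀ (by positivity)]
  calc _ = α₀ * F t * μ.real S' + A * (m * t ^ 2) * μ.real S := by field_simp
    _ ≤ _ := key

/-- On a measure space `(X, μ)` with measurable `S' ⊆ S`,
`μ(S) < ∞`, `μ(S') > 0`, `α ≥ 0` measurable essentially bounded with `α ≥ α₀ > 0`
a.e. on `S'`, `w` measurable with `0 ≤ w ≤ 1`, `w = 1` a.e. on `S'`, `w = 0` a.e. on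
`X ∖ S`, and `F : [0,∞) → ℝ` continuous with `F(0) = 0`,
`liminf_{t→0⁺} F(t)/t² > −∞` and `limsup_{t→0⁺} F(t)/t² = +∞`: then
`limsup_{t→0⁺} (1/t²) ∫ α F(t w) dμ = +∞`. -/
theorem stmt_17 {X : Type*} [MeasurableSpace X] (μ : Measure X)
    (S S' : Set X) (hS : MeasurableSet S) (hS' : MeasurableSet S') (hsub : S' ⊆ S)
    (hSfin : μ S < ⊤) (hS'pos : 0 < μ S')
    (α : X → ℝ) (hα_meas : Measurable α) (hα_nonneg : ∀ σ, 0 ≤ α σ)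
    (hα_top : MemLp α ⊤ μ)
    (α₀ : ℝ) (hα₀ : 0 < α₀) (hα_lb : ∀ᵐ σ ∂(μ.restrict S'), α₀ ≤ α σ)
    (w : X → ℝ) (hw_meas : Measurable w) (hw01 : ∀ σ, 0 ≤ w σ ∧ w σ ≤ 1)
    (hwS' : ∀ᵐ σ ∂(μ.restrict S'), w σ = 1)
    (hwout : ∀ᵐ σ ∂(μ.restrict Sᶜ), w σ = 0)
    (F : ℝ → ℝ) (hF_cont : ContinuousOn F (Set.Ici 0)) (hF0 : F 0 = 0)
    (hliminf : ∃ m : ℝ, ∀ᶠ t in 𝓝[>] (0 : ℝ), m ≤ F t / t ^ 2)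
    (hlimsup : ∀ M : ℝ, ∃ᶠ t in 𝓝[>] (0 : ℝ), M < F t / t ^ 2) :
    ∀ M : ℝ, ∃ᶠ t in 𝓝[>] (0 : ℝ), M < 1 / t ^ 2 * ∫ σ, α σ * F (t * w σ) ∂μ :=
  stmt_17_general μ S S' hS hS' hsub hSfin hS'pos α hα_nonneg hα_top α₀ hα₀ hα_lb w hw_meas hw01
    hwS' hwout F hF_cont hF0 hliminf hlimsup
end
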